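/- Let E be a Banach space, T(t) a uniformly bounded family of operators with T(t)P^c = P^c for a bounded projection P^c, P^s = I − P^c, and suppose y : [0,∞) → E is continuous, exponentially decaying, and satisfies the Lyapunov–Perron fixed-point equation y(t) = T(t)P^s y(0) + ∫₀ᵗ T(t−τ)P^s F(y(τ)) dτ − ∫_t^∞ P^c F(y(τ)) dτ for all t ≥ 0, where F(y(·)) is integrable on [0,∞). Then y satisfies the mild-solution (Duhamel) equation y(t) = T(t) y(0) + ∫₀ᵗ T(t−τ) F(y(τ)) dτ for all t ≥ 0, and P^c y(0) = −∫₀^∞ P^c F(y(τ)) dτ. -/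

import Mathlib

/-!
Since `T(t)` fixes `ran P^c` and `P^s = I - P^c`, the stable parts of the Lyapunov–Perron equation
differ from the Duhamel terms by `-P^c y(0)` and `-∫₀ᵗ P^c F(y(τ)) dτ`. Applying `P^c` at `t = 0`
kills the stable part and gives `P^c y(0) = -∫₀^∞ P^c F(y(τ)) dτ`; splitting `∫₀^∞ = ∫₀ᵗ + ∫ₜ^∞`
then makes all correction terms cancel.
-/

open MeasureTheory

namespace LyapunovPerron

variable {E : Type*} [NormedAddCommGroup E] [NormedSpace ℝ E]

lemma intervalIntegral_apply_sub_proj {T : ℝ → E →L[ℝ] E} {P : E →L[ℝ] E}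
    (hfix : ∀ s : ℝ, 0 ≤ s → ∀ x : E, T s (P x) = P x) {f : ℝ → E} {a t : ℝ} (hat : a ≤ t)
    (hTf : IntervalIntegrable (fun τ => T (t - τ) (f τ)) volume a t)
    (hPf : IntervalIntegrable (fun τ => P (f τ)) volume a t) :
    ∫ τ in a..t, T (t - τ) (f τ - P (f τ))
      = (∫ τ in a..t, T (t - τ) (f τ)) - ∫ τ in a..t, P (f τ) := by
  rw [← intervalIntegral.integral_sub hTf hPf]
  refine intervalIntegral.integral_congr fun τ hτ => ?_
  rw [Set.uIcc_of_le hat] at hτ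
  simp only [map_sub, hfix (t - τ) (sub_nonneg.2 hτ.2)]

end LyapunovPerron

open LyapunovPerron

theorem stmt_17_general {E : Type*} [NormedAddCommGroup E] [NormedSpace ℝ E] [CompleteSpace E]
    (T : ℝ → E →L[ℝ] E) (Pc : E →L[ℝ] E) (Ps : E →L[ℝ] E) (F : E → E) (y : ℝ → E)
    (hPs : Ps = ContinuousLinearMap.id ℝ E - Pc)
    (hproj : Pc.comp Pc = Pc)
    (hfix : ∀ t : ℝ, 0 ≤ t → ∀ x : E, T t (Pc x) = Pc x)
    (hcomm : ∀ t : ℝ, 0 ≤ t → ∀ x : E, T t (Pc x) = Pc (T t x))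
    (hFyint : IntegrableOn (fun τ => F (y τ)) (Set.Ici 0))
    (hTFint : ∀ t : ℝ, 0 ≤ t →
      IntervalIntegrable (fun τ => T (t - τ) (F (y τ))) volume 0 t)
    (hLP : ∀ t : ℝ, 0 ≤ t →
      y t = T t (Ps (y 0)) + (∫ τ in (0:ℝ)..t, T (t - τ) (Ps (F (y τ))))
              - ∫ τ in Set.Ici t, Pc (F (y τ))) :
    (∀ t : ℝ, 0 ≤ t → y t = T t (y 0) + ∫ τ in (0:ℝ)..t, T (t - τ) (F (y τ))) ∧
    Pc (y 0) = -∫ τ in Set.Ici (0:ℝ), Pc (F (y τ)) := by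
  have hPcPc (x : E) : Pc (Pc x) = Pc x := congr($hproj x)
  have hPs_apply (x : E) : Ps x = x - Pc x := by simp [hPs]
  have hPcF : IntegrableOn (fun τ => Pc (F (y τ))) (Set.Ici 0) := Pc.integrable_comp hFyint
  have hcenter : Pc (y 0) = -∫ τ in Set.Ici (0:ℝ), Pc (F (y τ)) := by
    have h0 := congr(Pc $(hLP 0 le_rfl))
    rw [intervalIntegral.integral_same, add_zero, map_sub, ← hcomm 0 le_rfl, hPs_apply, map_sub,
      hPcPc, sub_self, map_zero, zero_sub, ← Pc.integral_comp_comm hPcF] at h0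
    simpa only [hPcPc] using h0
  refine ⟨fun t ht => ?_, hcenter⟩
  have hPcF_t : IntegrableOn (fun τ => Pc (F (y τ))) (Set.Ici t) :=
    hPcF.mono_set (Set.Ici_subset_Ici.2 ht)
  have hPcF_0t : IntervalIntegrable (fun τ => Pc (F (y τ))) volume 0 t :=
    (intervalIntegrable_iff_integrableOn_Icc_of_le ht).2 (hPcF.mono_set Set.Icc_subset_Ici_self)
  have hsplit := intervalIntegral.integral_Ici_sub_Ici' hPcF hPcF_t
  simp only [hPs_apply] at hLP
  rw [hLP t ht, map_sub, hfix t ht, intervalIntegral_apply_sub_proj hfix ht (hTFint t ht) hPcF_0t,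
    hcenter, ← hsplit]
  abel

theorem stmt_17 {E : Type*} [NormedAddCommGroup E] [NormedSpace ℝ E] [CompleteSpace E]
    (T : ℝ → E →L[ℝ] E) (Pc : E →L[ℝ] E) (Ps : E →L[ℝ] E) (F : E → E) (y : ℝ → E)
    (hPs : Ps = ContinuousLinearMap.id ℝ E - Pc)
    (hproj : Pc.comp Pc = Pc)
    (hfix : ∀ t : ℝ, 0 ≤ t → ∀ x : E, T t (Pc x) = Pc x)
    (hcomm : ∀ t : ℝ, 0 ≤ t → ∀ x : E, T t (Pc x) = Pc (T t x))
    (hbdd : ∃ M : ℝ, ∀ t : ℝ, 0 ≤ t → ‖T t‖ ≤ M)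
    (hycont : Continuous y)
    (hydecay : ∃ K ω : ℝ, 0 < ω ∧ ∀ t : ℝ, 0 ≤ t → ‖y t‖ ≤ K * Real.exp (-ω * t))
    (hFyint : IntegrableOn (fun τ => F (y τ)) (Set.Ici 0))
    (hTFint : ∀ t : ℝ, 0 ≤ t →
      IntervalIntegrable (fun τ => T (t - τ) (F (y τ))) volume 0 t)
    (hLP : ∀ t : ℝ, 0 ≤ t →
      y t = T t (Ps (y 0)) + (∫ τ in (0:ℝ)..t, T (t - τ) (Ps (F (y τ))))
              - ∫ τ in Set.Ici t, Pc (F (y τ))) :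
    (∀ t : ℝ, 0 ≤ t → y t = T t (y 0) + ∫ τ in (0:ℝ)..t, T (t - τ) (F (y τ))) ∧
    Pc (y 0) = -∫ τ in Set.Ici (0:ℝ), Pc (F (y τ)) :=
  stmt_17_general T Pc Ps F y hPs hproj hfix hcomm hFyint hTFint hLP
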